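/- arXiv:1803.06007 — 2 statements merged into one kernel-verified Lean document; each statement's English description precedes it below -/
import Mathlib

section
/- Let ρ ∈ [0,1]^K with Σ_k ρ_k = 1 and let αₙ ∈ (0,1) be a sequence with lim_n αₙ = 0 and lim_n n·αₙ² = 0. Then lim_n n·D(Q_{αₙ}‖Q_∅) = 0; equivalently, the n-fold product distributions satisfy lim_n D(Q_{αₙ}^{⊗n}‖Q_∅^{⊗n}) = 0. -/
/-!
Under `Q_α` the active set `T` is a product of independent Bernoulli(`ρ_k α`) choices, so
`Q_α` puts weight at most `1 - ∏_k (1 - ρ_k α) ≤ Σ_k ρ_k α = α` off `Q_∅`; hence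
`|Q_α(z) - Q_∅(z)| ≤ α`. Bounding the KL divergence by the χ²-divergence gives
`D(Q_α‖Q_∅) ≤ α² Σ_z Q_∅(z)⁻¹`, so `n·D(Q_{αₙ}‖Q_∅) = O(n αₙ²) → 0`, and KL divergence is
additive over independent coordinates.
-/

open Finset Filter
open scoped Topology

noncomputable section

/-- `P` is a probability distribution on the finite type `Z`. -/
def IsDist {Z : Type*} [Fintype Z] (P : Z → ℝ) : Prop :=
  (∀ z, 0 ≤ P z) ∧ ∑ z, P z = 1

/-- Kullback–Leibler divergence `D(P‖Q)` (natural logarithm). -/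
def klDiv {Z : Type*} [Fintype Z] (P Q : Z → ℝ) : ℝ :=
  ∑ z, P z * Real.log (P z / Q z)

/-- `P` is absolutely continuous w.r.t. `Q`. -/
def AbsCont {Z : Type*} (P Q : Z → ℝ) : Prop :=
  ∀ z, Q z = 0 → P z = 0

/-- The output mixture `Q_α(z) = Σ_{T⊆[K]} (∏_{k∈T} ρ_k α)(∏_{k∉T}(1-ρ_k α)) Q_T(z)`. -/
def Qmix {K : ℕ} {Z : Type*} [Fintype Z] (Q : Finset (Fin K) → Z → ℝ) (ρ : Fin K → ℝ)
    (α : ℝ) (z : Z) : ℝ :=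
  ∑ T : Finset (Fin K), (∏ k ∈ T, ρ k * α) * (∏ k ∈ Tᶜ, (1 - ρ k * α)) * Q T z

lemma IsDist.le_one {Z : Type*} [Fintype Z] {P : Z → ℝ} (hP : IsDist P) (z : Z) : P z ≤ 1 :=
  hP.2 ▸ single_le_sum (fun i _ => hP.1 i) (mem_univ z)

lemma one_sub_sum_le_prod_one_sub {ι : Type*} (s : Finset ι) {f : ι → ℝ}
    (hf : ∀ i ∈ s, f i ∈ Set.Icc (0 : ℝ) 1) :
    1 - ∑ i ∈ s, f i ≤ ∏ i ∈ s, (1 - f i) := by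
  classical
  induction s using Finset.induction with
  | empty => simp
  | @insert a s ha ih =>
    rw [sum_insert ha, prod_insert ha]
    obtain ⟨hfa0, hfa1⟩ := hf a (mem_insert_self a s)
    have ih := ih fun i hi => hf i (mem_insert_of_mem hi)
    have hsum : 0 ≤ ∑ i ∈ s, f i := sum_nonneg fun i hi => (hf i (mem_insert_of_mem hi)).1
    nlinarith

lemma abs_sum_mul_sub_le {ι : Type*} [Fintype ι] [DecidableEq ι] {w q : ι → ℝ}
    (hw : ∀ i, 0 ≤ w i) (hw1 : ∑ i, w i = 1) (hq : ∀ i, q i ∈ Set.Icc (0 : ℝ) 1) (i₀ : ι) :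
    |∑ i, w i * q i - q i₀| ≤ 1 - w i₀ := by
  have hrest : ∑ i ∈ univ.erase i₀, w i = 1 - w i₀ := by
    rw [← hw1, ← sum_erase_add _ _ (mem_univ i₀)]; ring
  have hsplit : ∑ i, w i * q i - q i₀ = ∑ i ∈ univ.erase i₀, w i * (q i - q i₀) := by
    rw [← sum_erase_add _ _ (mem_univ i₀)]
    simp only [mul_sub, sum_sub_distrib, ← sum_mul, hrest]
    ring
  have hq' : ∀ i, |q i - q i₀| ≤ 1 := fun i =>
    abs_sub_le_of_nonneg_of_le (hq i).1 (hq i).2 (hq i₀).1 (hq i₀).2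
  calc |∑ i, w i * q i - q i₀|
      ≤ ∑ i ∈ univ.erase i₀, w i * |q i - q i₀| := by
        rw [hsplit]
        refine (abs_sum_le_sum_abs _ _).trans_eq (sum_congr rfl fun i _ => ?_)
        rw [abs_mul, abs_of_nonneg (hw i)]
    _ ≤ ∑ i ∈ univ.erase i₀, w i := sum_le_sum fun i _ => mul_le_of_le_one_right (hw i) (hq' i)
    _ = 1 - w i₀ := hrest

def bernoulliSetProb {ι : Type*} [Fintype ι] [DecidableEq ι] (p : ι → ℝ) (T : Finset ι) : ℝ :=
  (∏ k ∈ T, p k) * ∏ k ∈ Tᶜ, (1 - p k)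

section bernoulliSetProb

variable {ι : Type*} [Fintype ι] [DecidableEq ι]

lemma sum_bernoulliSetProb (p : ι → ℝ) : ∑ T, bernoulliSetProb p T = 1 := by
  simp [bernoulliSetProb, ← Fintype.prod_add]

lemma bernoulliSetProb_nonneg {p : ι → ℝ} (hp : ∀ k, p k ∈ Set.Icc (0 : ℝ) 1) (T : Finset ι) :
    0 ≤ bernoulliSetProb p T :=
  mul_nonneg (prod_nonneg fun k _ => (hp k).1)
    (prod_nonneg fun k _ => sub_nonneg.2 (hp k).2)

lemma one_sub_bernoulliSetProb_empty_le {p : ι → ℝ} (hp : ∀ k, p k ∈ Set.Icc (0 : ℝ) 1) :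
    1 - bernoulliSetProb p ∅ ≤ ∑ k, p k := by
  have := one_sub_sum_le_prod_one_sub univ fun k _ => hp k
  simp only [bernoulliSetProb, prod_empty, compl_empty, one_mul]
  linarith

end bernoulliSetProb

section Qmix

variable {K : ℕ} {Z : Type*} [Fintype Z] {Q : Finset (Fin K) → Z → ℝ}

lemma Qmix_eq_sum_bernoulliSetProb (ρ : Fin K → ℝ) (a : ℝ) (z : Z) :
    Qmix Q ρ a z = ∑ T, bernoulliSetProb (fun k => ρ k * a) T * Q T z :=
  rfl

lemma isDist_Qmix {ρ : Fin K → ℝ} {a : ℝ} (hQ : ∀ U, IsDist (Q U))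
    (hρ : ∀ k, ρ k ∈ Set.Icc (0 : ℝ) 1) (ha : a ∈ Set.Icc (0 : ℝ) 1) : IsDist (Qmix Q ρ a) := by
  have hw := bernoulliSetProb_nonneg fun k => unitInterval.mul_mem (hρ k) ha
  refine ⟨fun z => sum_nonneg fun T _ => mul_nonneg (hw T) ((hQ T).1 z), ?_⟩
  simp only [Qmix_eq_sum_bernoulliSetProb]
  rw [sum_comm]
  simp only [← mul_sum, (hQ _).2, mul_one, sum_bernoulliSetProb]

lemma absCont_Qmix (hAC : ∀ U : Finset (Fin K), U.Nonempty → AbsCont (Q U) (Q ∅))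
    (ρ : Fin K → ℝ) (a : ℝ) : AbsCont (Qmix Q ρ a) (Q ∅) := by
  intro z hz
  refine sum_eq_zero fun T _ => ?_
  rcases T.eq_empty_or_nonempty with rfl | hT
  · rw [hz, mul_zero]
  · rw [hAC T hT z hz, mul_zero]

lemma abs_Qmix_sub_le {ρ : Fin K → ℝ} {a : ℝ} (hQ : ∀ U, IsDist (Q U))
    (hρ : ∀ k, ρ k ∈ Set.Icc (0 : ℝ) 1) (hρ1 : ∑ k, ρ k = 1) (ha : a ∈ Set.Icc (0 : ℝ) 1) (z : Z) :
    |Qmix Q ρ a z - Q ∅ z| ≤ a := by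
  have hp k : ρ k * a ∈ Set.Icc (0 : ℝ) 1 := unitInterval.mul_mem (hρ k) ha
  calc |Qmix Q ρ a z - Q ∅ z| ≤ 1 - bernoulliSetProb (fun k => ρ k * a) ∅ :=
        abs_sum_mul_sub_le (bernoulliSetProb_nonneg hp) (sum_bernoulliSetProb _)
          (fun T => ⟨(hQ T).1 z, (hQ T).le_one z⟩) ∅
    _ ≤ ∑ k, ρ k * a := one_sub_bernoulliSetProb_empty_le hp
    _ = a := by rw [← sum_mul, hρ1, one_mul]

end Qmix

lemma sub_le_mul_log_div {p q : ℝ} (hp : 0 ≤ p) (hq : 0 ≤ q) (hpq : q = 0 → p = 0) :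
    p - q ≤ p * Real.log (p / q) := by
  rcases hq.eq_or_lt with rfl | hq
  · simp [hpq rfl]
  rcases hp.eq_or_lt with rfl | hp
  · simpa using hq.le
  calc p - q = p * (1 - (p / q)⁻¹) := by field_simp
    _ ≤ p * Real.log (p / q) :=
      mul_le_mul_of_nonneg_left (Real.one_sub_inv_le_log_of_pos (div_pos hp hq)) hp.le

lemma mul_log_div_le {p q : ℝ} (hp : 0 ≤ p) (hq : 0 ≤ q) (hpq : q = 0 → p = 0) :
    p * Real.log (p / q) ≤ (p - q) ^ 2 / q + (p - q) := by
  rcases hq.eq_or_lt with rfl | hq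
  · simp [hpq rfl]
  rcases hp.eq_or_lt with rfl | hp
  · simp [sq, hq.ne']
  calc p * Real.log (p / q) ≤ p * (p / q - 1) :=
        mul_le_mul_of_nonneg_left (Real.log_le_sub_one_of_pos (div_pos hp hq)) hp.le
    _ = (p - q) ^ 2 / q + (p - q) := by field_simp; ring

section klDiv

variable {Z : Type*} [Fintype Z] {P Q : Z → ℝ}

lemma klDiv_nonneg (hP : IsDist P) (hQ : IsDist Q) (hPQ : AbsCont P Q) : 0 ≤ klDiv P Q := by
  have := sum_le_sum fun z (_ : z ∈ univ) => sub_le_mul_log_div (hP.1 z) (hQ.1 z) (hPQ z)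
  rwa [sum_sub_distrib, hP.2, hQ.2, sub_self] at this

lemma klDiv_le_sum_sq_div (hP : IsDist P) (hQ : IsDist Q) (hPQ : AbsCont P Q) :
    klDiv P Q ≤ ∑ z, (P z - Q z) ^ 2 / Q z := by
  have := sum_le_sum fun z (_ : z ∈ univ) => mul_log_div_le (hP.1 z) (hQ.1 z) (hPQ z)
  rwa [sum_add_distrib, sum_sub_distrib, hP.2, hQ.2, sub_self, add_zero] at this

/-- Thanks to `0⁻¹ = 0`, the points with `Q z = 0` contribute nothing to the constant. -/
lemma klDiv_le_mul_sq (hP : IsDist P) (hQ : IsDist Q) (hPQ : AbsCont P Q) {ε : ℝ}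
    (hε : ∀ z, |P z - Q z| ≤ ε) : klDiv P Q ≤ (∑ z, (Q z)⁻¹) * ε ^ 2 := by
  refine (klDiv_le_sum_sq_div hP hQ hPQ).trans ?_
  rw [sum_mul]
  refine sum_le_sum fun z _ => ?_
  rw [div_eq_mul_inv, mul_comm ((Q z)⁻¹)]
  exact mul_le_mul_of_nonneg_right (sq_le_sq' (abs_le.1 (hε z)).1 (abs_le.1 (hε z)).2)
    (inv_nonneg.2 (hQ.1 z))

end klDiv

lemma mul_log_div_prod {ι Z : Type*} [Fintype ι] {P Q : Z → ℝ} (hPQ : AbsCont P Q)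
    (z : ι → Z) :
    (∏ j, P (z j)) * Real.log ((∏ j, P (z j)) / ∏ j, Q (z j))
      = ∑ j, (∏ i, P (z i)) * Real.log (P (z j) / Q (z j)) := by
  by_cases hz : ∀ j, P (z j) ≠ 0
  · have hQz : ∀ j, Q (z j) ≠ 0 := fun j h => hz j (hPQ _ h)
    rw [← prod_div_distrib, Real.log_prod fun j _ => div_ne_zero (hz j) (hQz j), mul_sum]
  · obtain ⟨j, hj⟩ := not_forall_not.1 hz
    rw [prod_eq_zero (mem_univ j) hj]
    simp

section pi

variable {ι Z : Type*} [Fintype ι] [DecidableEq ι] [Fintype Z] {P Q : Z → ℝ}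

lemma sum_prod_mul_apply (hP : ∑ x, P x = 1) (f : Z → ℝ) (j : ι) :
    ∑ z : ι → Z, (∏ i, P (z i)) * f (z j) = ∑ x, P x * f x := by
  let g : ι → Z → ℝ := fun i x => P x * if i = j then f x else 1
  have hg : ∀ z : ι → Z, ∏ i, g i (z i) = (∏ i, P (z i)) * f (z j) := fun z => by
    simp only [g, prod_mul_distrib, prod_ite_eq', mem_univ, if_true]
  have hsum_g : ∀ i, ∑ x, g i x = if i = j then ∑ x, P x * f x else 1 := fun i => by
    by_cases hij : i = j <;> simp [g, hij, hP]
  simp_rw [← hg, ← Fintype.prod_sum, hsum_g, prod_ite_eq', mem_univ, if_true]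

lemma klDiv_pi (hP : IsDist P) (hPQ : AbsCont P Q) :
    klDiv (fun z : ι → Z => ∏ j, P (z j)) (fun z => ∏ j, Q (z j))
      = Fintype.card ι * klDiv P Q := by
  simp only [klDiv, mul_log_div_prod hPQ]
  rw [sum_comm]
  simp only [sum_prod_mul_apply hP.2 fun x => Real.log (P x / Q x), sum_const, card_univ,
    nsmul_eq_mul]

end pi

theorem covert_process_indistinguishable_general (K : ℕ) {Z : Type*} [Fintype Z]
    (Q : Finset (Fin K) → Z → ℝ) (hQ : ∀ U, IsDist (Q U))
    (hAC : ∀ U : Finset (Fin K), U.Nonempty → AbsCont (Q U) (Q ∅))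
    (ρ : Fin K → ℝ) (hρ : ∀ k, ρ k ∈ Set.Icc (0 : ℝ) 1) (hρ1 : ∑ k, ρ k = 1)
    (α : ℕ → ℝ) (hα : ∀ n, α n ∈ Set.Ioo (0 : ℝ) 1)
    (hnα2 : Tendsto (fun n : ℕ => (n : ℝ) * (α n) ^ 2) atTop (𝓝 0)) :
    Tendsto (fun n : ℕ => (n : ℝ) * klDiv (Qmix Q ρ (α n)) (Q ∅)) atTop (𝓝 0) ∧
      Tendsto (fun n : ℕ => klDiv (fun z : Fin n → Z => ∏ j, Qmix Q ρ (α n) (z j))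
        (fun z : Fin n → Z => ∏ j, Q ∅ (z j))) atTop (𝓝 0) := by
  have hαI n : α n ∈ Set.Icc (0 : ℝ) 1 := Set.Ioo_subset_Icc_self (hα n)
  have hdist n := isDist_Qmix hQ hρ (hαI n)
  have hac n := absCont_Qmix hAC ρ (α n)
  have hbound (n : ℕ) : (n : ℝ) * klDiv (Qmix Q ρ (α n)) (Q ∅)
      ≤ (∑ z, (Q ∅ z)⁻¹) * ((n : ℝ) * α n ^ 2) := by
    have := klDiv_le_mul_sq (hdist n) (hQ ∅) (hac n) (abs_Qmix_sub_le hQ hρ hρ1 (hαI n))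
    exact (mul_le_mul_of_nonneg_left this n.cast_nonneg).trans_eq (by ring)
  have hfirst : Tendsto (fun n : ℕ => (n : ℝ) * klDiv (Qmix Q ρ (α n)) (Q ∅)) atTop (𝓝 0) :=
    squeeze_zero (fun n => mul_nonneg n.cast_nonneg (klDiv_nonneg (hdist n) (hQ ∅) (hac n)))
      hbound (by simpa using hnα2.const_mul (∑ z, (Q ∅ z)⁻¹))
  refine ⟨hfirst, hfirst.congr fun n => ?_⟩
  rw [klDiv_pi (hdist n) (hac n), Fintype.card_fin]

/-- if `αₙ → 0` and `n·αₙ² → 0`, then `n·D(Q_{αₙ}‖Q_∅) → 0`; equivalently the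
`n`-fold product distributions satisfy `D(Q_{αₙ}^{⊗n}‖Q_∅^{⊗n}) → 0`. -/
theorem covert_process_indistinguishable (K : ℕ) (hK : 2 ≤ K) {Z : Type*} [Fintype Z]
    (Q : Finset (Fin K) → Z → ℝ) (hQ : ∀ U, IsDist (Q U))
    (hAC : ∀ U : Finset (Fin K), U.Nonempty → AbsCont (Q U) (Q ∅))
    (ρ : Fin K → ℝ) (hρ : ∀ k, ρ k ∈ Set.Icc (0 : ℝ) 1) (hρ1 : ∑ k, ρ k = 1)
    (α : ℕ → ℝ) (hα : ∀ n, α n ∈ Set.Ioo (0 : ℝ) 1)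
    (hα0 : Tendsto α atTop (𝓝 0))
    (hnα2 : Tendsto (fun n : ℕ => (n : ℝ) * (α n) ^ 2) atTop (𝓝 0)) :
    Tendsto (fun n : ℕ => (n : ℝ) * klDiv (Qmix Q ρ (α n)) (Q ∅)) atTop (𝓝 0) ∧
      Tendsto (fun n : ℕ => klDiv (fun z : Fin n → Z => ∏ j, Qmix Q ρ (α n) (z j))
        (fun z : Fin n → Z => ∏ j, Q ∅ (z j))) atTop (𝓝 0) :=
  covert_process_indistinguishable_general K Q hQ hAC ρ hρ hρ1 α hα hnα2
end
end

section
/- Let Z be a finite set and, for each subset T ⊆ {1,…,K}, let Q_T be a probability distribution on Z. Assume Q_∅ cannot be written as a convex combination of {Q_T : T ⊆ {1,…,K}, T ≠ ∅}. For each n, let μ⁽ⁿ⁾ ∈ [0,1]^K and define the mixture Q̂ₙ(z) := Σ_{T⊆{1,…,K}} (∏_{k∈T} μ_k⁽ⁿ⁾)(∏_{k∉T}(1 − μ_k⁽ⁿ⁾)) Q_T(z). If Q̂ₙ(z) → Q_∅(z) as n → ∞ for every z ∈ Z, then lim_n μ_k⁽ⁿ⁾ = 0 for every k ∈ {1,…,K}.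 -/
/-!
A cluster point `a` of the sequence `μ⁽ⁿ⁾` in the compact cube `[0,1]^K` gives, by continuity,
`Q_∅ = Σ_T w_T(a) Q_T`, where `w(a)` is the law of the set of successes of independent
Bernoulli trials with parameters `a`. If `a ≠ 0` then `w_∅(a) = ∏ₖ (1 - aₖ) < 1`, and moving the
`T = ∅` term to the left and renormalising writes `Q_∅` as a convex combination of the other
`Q_T`. Hence `0` is the only cluster point, and compactness gives `μ⁽ⁿ⁾ → 0`.
-/

open Finset Filter
open scoped Topology

noncomputable section

theorem MapClusterPt.eq_of_tendsto_comp {X Y α : Type*} [TopologicalSpace X] [TopologicalSpace Y]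
    [T2Space Y] {F : Filter α} {u : α → X} {x : X} {f : X → Y} {y : Y}
    (hu : MapClusterPt x F u) (hf : ContinuousAt f x) (h : Tendsto (f ∘ u) F (𝓝 y)) :
    f x = y :=
  eq_of_nhds_neBot (ClusterPt.neBot (hu.continuousAt_comp hf) |>.mono (inf_le_inf_left _ h))

theorem exists_convex_weights_zero_at_of_eq_sum_smul {ι E : Type*} [Fintype ι] [DecidableEq ι]
    [AddCommGroup E] [Module ℝ E] {v : ι → E} {w : ι → ℝ} {i₀ : ι}
    (hw₀ : ∀ i, 0 ≤ w i) (hw₁ : ∑ i, w i = 1) (hwi₀ : w i₀ < 1)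
    (hv : v i₀ = ∑ i, w i • v i) :
    ∃ lam : ι → ℝ, (∀ i, 0 ≤ lam i) ∧ lam i₀ = 0 ∧ ∑ i, lam i = 1 ∧
      v i₀ = ∑ i, lam i • v i := by
  set c := 1 - w i₀
  have hc : 0 < c := sub_pos.2 hwi₀
  refine ⟨fun i => c⁻¹ * (w i - (Pi.single i₀ (w i₀) : ι → ℝ) i), fun i => ?_, by simp, ?_, ?_⟩
  · by_cases hi : i = i₀
    · subst hi; simp
    · simpa [hi] using mul_nonneg (inv_nonneg.2 hc.le) (hw₀ i)
  · rw [← mul_sum, sum_sub_distrib, hw₁, sum_pi_single', if_pos (mem_univ _),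
      inv_mul_cancel₀ hc.ne']
  · have hsingle : ∑ i, (Pi.single i₀ (w i₀) : ι → ℝ) i • v i = w i₀ • v i₀ := by
      rw [Fintype.sum_eq_single i₀ fun i hi => by simp [hi]]; simp
    have hsub : v i₀ - w i₀ • v i₀ = c • v i₀ := by rw [sub_smul, one_smul]
    simp only [mul_smul, sub_smul, ← smul_sum, sum_sub_distrib, ← hv, hsingle, hsub]
    rw [inv_smul_smul₀ hc.ne']

section
variable {ι : Type*} [Fintype ι] [DecidableEq ι]

def bernoulliWeight (m : ι → ℝ) (T : Finset ι) : ℝ :=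
  (∏ k ∈ T, m k) * ∏ k ∈ Tᶜ, (1 - m k)

theorem sum_bernoulliWeight (m : ι → ℝ) : ∑ T, bernoulliWeight m T = 1 := by
  simpa [bernoulliWeight, compl_eq_univ_sdiff] using (prod_add m (fun k => 1 - m k) univ).symm

theorem bernoulliWeight_nonneg {m : ι → ℝ} (hm : ∀ k, m k ∈ Set.Icc 0 1) (T : Finset ι) :
    0 ≤ bernoulliWeight m T :=
  mul_nonneg (prod_nonneg fun k _ => (hm k).1) (prod_nonneg fun k _ => sub_nonneg.2 (hm k).2)

theorem bernoulliWeight_empty_lt_one {m : ι → ℝ} (hm : ∀ k, m k ∈ Set.Icc 0 1) {k : ι}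
    (hk : m k ≠ 0) : bernoulliWeight m ∅ < 1 := by
  have hrest : ∏ j ∈ univ.erase k, (1 - m j) ≤ 1 :=
    prod_le_one (fun j _ => sub_nonneg.2 (hm j).2) fun j _ => sub_le_self _ (hm j).1
  calc bernoulliWeight m ∅ = (1 - m k) * ∏ j ∈ univ.erase k, (1 - m j) := by
        simp [bernoulliWeight, mul_prod_erase univ (fun j => 1 - m j) (mem_univ k)]
    _ ≤ 1 - m k := mul_le_of_le_one_right (sub_nonneg.2 (hm k).2) hrest
    _ < 1 := sub_lt_self _ ((hm k).1.lt_of_ne' hk)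

@[fun_prop]
theorem continuous_bernoulliWeight (T : Finset ι) :
    Continuous fun m : ι → ℝ => bernoulliWeight m T := by
  unfold bernoulliWeight; fun_prop

end

theorem mixture_convergence_forces_mu_zero_general (K : ℕ) {Z : Type*} [Fintype Z]
    (Q : Finset (Fin K) → Z → ℝ)
    (hNC : ¬ ∃ lam : Finset (Fin K) → ℝ, (∀ T, 0 ≤ lam T) ∧ lam ∅ = 0 ∧
      (∑ T : Finset (Fin K), lam T) = 1 ∧
      ∀ z, Q ∅ z = ∑ T : Finset (Fin K), lam T * Q T z)
    (μ : ℕ → Fin K → ℝ) (hμ : ∀ n k, μ n k ∈ Set.Icc (0 : ℝ) 1)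
    (hconv : ∀ z, Tendsto (fun n => ∑ T : Finset (Fin K),
        (∏ k ∈ T, μ n k) * (∏ k ∈ Tᶜ, (1 - μ n k)) * Q T z) atTop (𝓝 (Q ∅ z))) :
    ∀ k, Tendsto (fun n => μ n k) atTop (𝓝 0) := by
  suffices Tendsto μ atTop (𝓝 0) from tendsto_pi_nhds.1 this
  refine (isCompact_univ_pi fun _ => isCompact_Icc).tendsto_nhds_of_unique_mapClusterPt
    (.of_forall fun n => Set.mem_univ_pi.2 (hμ n)) fun a haCube hcluster => ?_
  have ha : ∀ k, a k ∈ Set.Icc (0 : ℝ) 1 := Set.mem_univ_pi.1 haCube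
  have hlimit : Q ∅ = ∑ T, bernoulliWeight a T • Q T := funext fun z => by
    simpa using (hcluster.eq_of_tendsto_comp (f := fun m => ∑ T, bernoulliWeight m T * Q T z)
      (by fun_prop) (hconv z)).symm
  by_contra hne
  obtain ⟨k, hk⟩ := Function.ne_iff.1 hne
  obtain ⟨lam, hlam₀, hlam_empty, hlam₁, hlam⟩ := exists_convex_weights_zero_at_of_eq_sum_smul
    (bernoulliWeight_nonneg ha) (sum_bernoulliWeight a) (bernoulliWeight_empty_lt_one ha hk) hlimit
  exact hNC ⟨lam, hlam₀, hlam_empty, hlam₁, fun z => by simpa using congrFun hlam z⟩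

/-- if `Q_∅` is not a convex combination of `{Q_T : T ≠ ∅}` and the mixtures
`Q̂ₙ` (with per-user one-probabilities `μ⁽ⁿ⁾`) converge pointwise to `Q_∅`, then every
`μ_k⁽ⁿ⁾` tends to `0`. -/
theorem mixture_convergence_forces_mu_zero (K : ℕ) (hK : 2 ≤ K) {Z : Type*} [Fintype Z]
    (Q : Finset (Fin K) → Z → ℝ) (hQ : ∀ T, IsDist (Q T))
    (hNC : ¬ ∃ lam : Finset (Fin K) → ℝ, (∀ T, 0 ≤ lam T) ∧ lam ∅ = 0 ∧
      (∑ T : Finset (Fin K), lam T) = 1 ∧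
      ∀ z, Q ∅ z = ∑ T : Finset (Fin K), lam T * Q T z)
    (μ : ℕ → Fin K → ℝ) (hμ : ∀ n k, μ n k ∈ Set.Icc (0 : ℝ) 1)
    (hconv : ∀ z, Tendsto (fun n => ∑ T : Finset (Fin K),
        (∏ k ∈ T, μ n k) * (∏ k ∈ Tᶜ, (1 - μ n k)) * Q T z) atTop (𝓝 (Q ∅ z))) :
    ∀ k, Tendsto (fun n => μ n k) atTop (𝓝 0) :=
  mixture_convergence_forces_mu_zero_general K Q hNC μ hμ hconv
end
end
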